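/- arXiv:2501.11070 — 8 statements merged into one kernel-verified Lean document; each statement's English description precedes it below -/
import Mathlib

section
/- Let $(V,\rho,\alpha)$ be a representation of a Nijenhuis mock-Lie algebra $(\mathcal{A},[~,~],N)$. Define on $\mathcal{A}\oplus V$ the bracket $[x+u,y+v]_\star = [x,y]+\rho(x)v+\rho(y)u$ and the linear map $(N+\alpha)(x+u)=N(x)+\alpha(u)$. Then $(\mathcal{A}\oplus V, [~,~]_\star, N+\alpha)$ is a Nijenhuis mock-Lie algebra. -/
/-- The semi-direct product bracket `[x+u, y+v]_⋆ = [x,y] + ρ(x)v + ρ(y)u` on `A ⊕ V`. -/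
def starBracket {K A V : Type*} [Field K] [AddCommGroup A] [Module K A]
    [AddCommGroup V] [Module K V] (b : A →ₗ[K] A →ₗ[K] A)
    (ρ : A →ₗ[K] V →ₗ[K] V) (p q : A × V) : A × V :=
  (b p.1 q.1, ρ p.1 q.2 + ρ q.1 p.2)

/-- The map `(N+α)(x+u) = N(x) + α(u)` on `A ⊕ V`. -/
def sumMap {K A V : Type*} [Field K] [AddCommGroup A] [Module K A]
    [AddCommGroup V] [Module K V] (N : A →ₗ[K] A) (α : V →ₗ[K] V) (p : A × V) : A × V :=
  (N p.1, α p.2)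

section SemidirectProduct

variable {K A V : Type*} [Field K] [AddCommGroup A] [Module K A] [AddCommGroup V] [Module K V]
  (b : A →ₗ[K] A →ₗ[K] A) (N : A →ₗ[K] A) (ρ : A →ₗ[K] V →ₗ[K] V) (α : V →ₗ[K] V)

theorem starBracket_comm (hcomm : ∀ x y : A, b x y = b y x) (p q : A × V) :
    starBracket b ρ p q = starBracket b ρ q p :=
  Prod.ext (hcomm p.1 q.1) (add_comm _ _)

/-- The `V`-component cancels cyclically once each `ρ [y,z]` is expanded by the representation
identity. -/
theorem starBracket_jacobi
    (hjac : ∀ x y z : A, b x (b y z) + b y (b z x) + b z (b x y) = 0)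
    (hrep : ∀ (x y : A) (v : V), ρ (b x y) v = - ρ x (ρ y v) - ρ y (ρ x v))
    (p q r : A × V) :
    starBracket b ρ p (starBracket b ρ q r) + starBracket b ρ q (starBracket b ρ r p) +
      starBracket b ρ r (starBracket b ρ p q) = 0 := by
  refine Prod.ext (hjac p.1 q.1 r.1) ?_
  simp only [starBracket, Prod.snd_add, Prod.snd_zero, map_add, hrep]
  abel

theorem sumMap_starBracket_nijenhuis
    (hN : ∀ x y : A, b (N x) (N y) + N (N (b x y)) = N (b (N x) y) + N (b x (N y)))
    (hα : ∀ (x : A) (v : V),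
      ρ (N x) (α v) + α (α (ρ x v)) = α (ρ (N x) v) + α (ρ x (α v)))
    (p q : A × V) :
    starBracket b ρ (sumMap N α p) (sumMap N α q) +
        sumMap N α (sumMap N α (starBracket b ρ p q)) =
      sumMap N α (starBracket b ρ (sumMap N α p) q) +
        sumMap N α (starBracket b ρ p (sumMap N α q)) := by
  refine Prod.ext (hN p.1 q.1) ?_
  simp only [starBracket, sumMap, Prod.snd_add, map_add]
  linear_combination (norm := abel) hα p.1 q.2 + hα q.1 p.2

end SemidirectProduct

theorem stmt1_general {K A V : Type*} [Field K]
    [AddCommGroup A] [Module K A] [AddCommGroup V] [Module K V]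
    (b : A →ₗ[K] A →ₗ[K] A) (N : A →ₗ[K] A)
    (ρ : A →ₗ[K] V →ₗ[K] V) (α : V →ₗ[K] V)
    (hcomm : ∀ x y : A, b x y = b y x)
    (hjac : ∀ x y z : A, b x (b y z) + b y (b z x) + b z (b x y) = 0)
    (hN : ∀ x y : A, b (N x) (N y) + N (N (b x y)) = N (b (N x) y) + N (b x (N y)))
    (hrep : ∀ (x y : A) (v : V), ρ (b x y) v = - ρ x (ρ y v) - ρ y (ρ x v))
    (hα : ∀ (x : A) (v : V),
      ρ (N x) (α v) + α (α (ρ x v)) = α (ρ (N x) v) + α (ρ x (α v))) :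
    (∀ p q : A × V, starBracket b ρ p q = starBracket b ρ q p) ∧
    (∀ p q r : A × V,
      starBracket b ρ p (starBracket b ρ q r) +
      starBracket b ρ q (starBracket b ρ r p) +
      starBracket b ρ r (starBracket b ρ p q) = 0) ∧
    (∀ p q : A × V,
      starBracket b ρ (sumMap N α p) (sumMap N α q) +
        sumMap N α (sumMap N α (starBracket b ρ p q)) =
      sumMap N α (starBracket b ρ (sumMap N α p) q) +
        sumMap N α (starBracket b ρ p (sumMap N α q))) :=
  ⟨starBracket_comm b ρ hcomm, starBracket_jacobi b ρ hjac hrep,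
    sumMap_starBracket_nijenhuis b N ρ α hN hα⟩

/-- If `(V,ρ,α)` is a representation of the Nijenhuis mock-Lie algebra `(A,[,],N)`,
then `(A ⊕ V, [,]_⋆, N+α)` is a Nijenhuis mock-Lie algebra. -/
theorem stmt1 {K A V : Type*} [Field K] [CharZero K]
    [AddCommGroup A] [Module K A] [AddCommGroup V] [Module K V]
    (b : A →ₗ[K] A →ₗ[K] A) (N : A →ₗ[K] A)
    (ρ : A →ₗ[K] V →ₗ[K] V) (α : V →ₗ[K] V)
    (hcomm : ∀ x y : A, b x y = b y x)
    (hjac : ∀ x y z : A, b x (b y z) + b y (b z x) + b z (b x y) = 0)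
    (hN : ∀ x y : A, b (N x) (N y) + N (N (b x y)) = N (b (N x) y) + N (b x (N y)))
    (hrep : ∀ (x y : A) (v : V), ρ (b x y) v = - ρ x (ρ y v) - ρ y (ρ x v))
    (hα : ∀ (x : A) (v : V),
      ρ (N x) (α v) + α (α (ρ x v)) = α (ρ (N x) v) + α (ρ x (α v))) :
    (∀ p q : A × V, starBracket b ρ p q = starBracket b ρ q p) ∧
    (∀ p q r : A × V,
      starBracket b ρ p (starBracket b ρ q r) +
      starBracket b ρ q (starBracket b ρ r p) +
      starBracket b ρ r (starBracket b ρ p q) = 0) ∧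
    (∀ p q : A × V,
      starBracket b ρ (sumMap N α p) (sumMap N α q) +
        sumMap N α (sumMap N α (starBracket b ρ p q)) =
      sumMap N α (starBracket b ρ (sumMap N α p) q) +
        sumMap N α (starBracket b ρ p (sumMap N α q))) :=
  stmt1_general b N ρ α hcomm hjac hN hrep hα
end

section
/- Let $(\mathcal{A},[~,~],N)$ be a Nijenhuis mock-Lie algebra, $(V,\rho)$ a representation of $(\mathcal{A},[~,~])$, and $\beta:V\to V$ a linear map. Then $(V^*,\rho^*,\beta^*)$ is a representation of the Nijenhuis mock-Lie algebra $(\mathcal{A},[~,~],N)$ if and only if $\beta(\rho(N(x))v) + \rho(x)\beta^2(v) = \rho(N(x))\beta(v) + \beta(\rho(x)\beta(v))$ for all $x\in\mathcal{A}$, $v\in V$. -/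
/-!
Dualising reverses the order of composition, so the Nijenhuis compatibility of `β^*` with `ρ^*`
is, evaluated on `v`, a functional applied to the transposed identity on `V`; since functionals
separate the points of a vector space, the two are equivalent. The mock-Lie representation
identity is symmetric in `x` and `y`, so it survives the reversal and holds for `ρ^*` for free.
-/

open Module

theorem Module.forall_dual_apply_eq_iff {R M : Type*} [CommRing R] [AddCommGroup M] [Module R M]
    [Projective R M] {u w : M} : (∀ φ : Dual R M, φ u = φ w) ↔ u = w := by
  simpa only [map_sub, sub_eq_zero] using forall_dual_apply_eq_zero_iff R (u - w)

section

variable {R A M : Type*} [CommRing R] [AddCommGroup A] [Module R A] [AddCommGroup M] [Module R M]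

def IsMockLieRep (b : A →ₗ[R] A →ₗ[R] A) (ρ : A →ₗ[R] Module.End R M) : Prop :=
  ∀ (x y : A) (v : M), ρ (b x y) v = -ρ x (ρ y v) - ρ y (ρ x v)

def IsNijenhuisRep (N : A →ₗ[R] A) (ρ : A →ₗ[R] Module.End R M) (α : Module.End R M) : Prop :=
  ∀ (x : A) (v : M), ρ (N x) (α v) + α (α (ρ x v)) = α (ρ (N x) v) + α (ρ x (α v))

def dualRep (ρ : A →ₗ[R] Module.End R M) : A →ₗ[R] Module.End R (Dual R M) :=
  Dual.transpose ∘ₗ ρ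

@[simp]
theorem dualRep_apply (ρ : A →ₗ[R] Module.End R M) (x : A) : dualRep ρ x = (ρ x).dualMap := rfl

theorem IsMockLieRep.dual {b : A →ₗ[R] A →ₗ[R] A} {ρ : A →ₗ[R] Module.End R M}
    (hρ : IsMockLieRep b ρ) : IsMockLieRep b (dualRep ρ) := by
  intro x y φ
  ext v
  simp only [dualRep_apply, LinearMap.dualMap_apply, LinearMap.sub_apply, LinearMap.neg_apply,
    hρ x y v, map_sub, map_neg]
  ring

theorem isNijenhuisRep_dual_iff [Projective R M] {N : A →ₗ[R] A} {ρ : A →ₗ[R] Module.End R M}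
    {β : Module.End R M} : IsNijenhuisRep N (dualRep ρ) β.dualMap ↔
      ∀ (x : A) (v : M), β (ρ (N x) v) + ρ x (β (β v)) = ρ (N x) (β v) + β (ρ x (β v)) := by
  simp only [IsNijenhuisRep, LinearMap.ext_iff, dualRep_apply, LinearMap.add_apply,
    LinearMap.dualMap_apply, ← map_add]
  refine forall_congr' fun x ↦ ?_
  rw [forall_comm]
  exact forall_congr' fun v ↦ Module.forall_dual_apply_eq_iff

end

theorem stmt3_general {K A V : Type*} [Field K]
    [AddCommGroup A] [Module K A] [AddCommGroup V] [Module K V]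
    (b : A →ₗ[K] A →ₗ[K] A) (N : A →ₗ[K] A)
    (ρ : A →ₗ[K] V →ₗ[K] V) (β : V →ₗ[K] V)
    (hrep : ∀ (x y : A) (v : V), ρ (b x y) v = - ρ x (ρ y v) - ρ y (ρ x v)) :
    ((∀ (x y : A) (f : Dual K V),
        (ρ (b x y)).dualMap f =
          - (ρ x).dualMap ((ρ y).dualMap f) - (ρ y).dualMap ((ρ x).dualMap f)) ∧
     (∀ (x : A) (f : Dual K V),
        (ρ (N x)).dualMap (β.dualMap f) + β.dualMap (β.dualMap ((ρ x).dualMap f)) =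
          β.dualMap ((ρ (N x)).dualMap f) + β.dualMap ((ρ x).dualMap (β.dualMap f)))) ↔
    (∀ (x : A) (v : V),
      β (ρ (N x) v) + ρ x (β (β v)) = ρ (N x) (β v) + β (ρ x (β v))) :=
  show IsMockLieRep b (dualRep ρ) ∧ IsNijenhuisRep N (dualRep ρ) β.dualMap ↔ _ by
    rw [isNijenhuisRep_dual_iff]
    exact and_iff_right (IsMockLieRep.dual hrep)

/-- `(V^*, ρ^*, β^*)` is a representation of the Nijenhuis mock-Lie algebra `(A,[,],N)`
iff `β(ρ(N x)v) + ρ(x)β²(v) = ρ(N x)β(v) + β(ρ(x)β(v))` for all `x, v`. -/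
theorem stmt3 {K A V : Type*} [Field K] [CharZero K]
    [AddCommGroup A] [Module K A] [AddCommGroup V] [Module K V]
    [FiniteDimensional K V]
    (b : A →ₗ[K] A →ₗ[K] A) (N : A →ₗ[K] A)
    (ρ : A →ₗ[K] V →ₗ[K] V) (β : V →ₗ[K] V)
    (hcomm : ∀ x y : A, b x y = b y x)
    (hjac : ∀ x y z : A, b x (b y z) + b y (b z x) + b z (b x y) = 0)
    (hN : ∀ x y : A, b (N x) (N y) + N (N (b x y)) = N (b (N x) y) + N (b x (N y)))
    (hrep : ∀ (x y : A) (v : V), ρ (b x y) v = - ρ x (ρ y v) - ρ y (ρ x v)) :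
    ((∀ (x y : A) (f : Dual K V),
        (ρ (b x y)).dualMap f =
          - (ρ x).dualMap ((ρ y).dualMap f) - (ρ y).dualMap ((ρ x).dualMap f)) ∧
     (∀ (x : A) (f : Dual K V),
        (ρ (N x)).dualMap (β.dualMap f) + β.dualMap (β.dualMap ((ρ x).dualMap f)) =
          β.dualMap ((ρ (N x)).dualMap f) + β.dualMap ((ρ x).dualMap (β.dualMap f)))) ↔
    (∀ (x : A) (v : V),
      β (ρ (N x) v) + ρ x (β (β v)) = ρ (N x) (β v) + β (ρ x (β v))) :=
  stmt3_general b N ρ β hrep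
end

section
/- Let $(\mathcal{A},\Delta)$ be a mock-Lie coalgebra and $\omega$ a skew-symmetric bilinear form on $\mathcal{A}$ which is a solution of the co-classical mock-Lie Yang-Baxter equation: $\omega(x_{(1)},y)\omega(x_{(2)},z) + \omega(x,z_{(1)})\omega(y,z_{(2)}) - \omega(x,y_{(1)})\omega(y_{(2)},z) = 0$ for all $x,y,z$. Then the multiplication $[x,y]_\omega = x_{(1)}\omega(x_{(2)},y) - y_{(1)}\omega(x,y_{(2)})$ gives a mock-Lie algebra structure on $\mathcal{A}$; in particular $[~,~]_\omega$ is commutative and satisfies the Jacobi identity $[x,[y,z]_\omega]_\omega + [y,[z,x]_\omega]_\omega + [z,[x,y]_\omega]_\omega = 0$. -/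
open TensorProduct LinearMap Module

/-- Cocommutativity. -/
def IsCocomm {K A : Type*} [Field K] [AddCommGroup A] [Module K A]
    (Δ : A →ₗ[K] A ⊗[K] A) : Prop :=
  ∀ x : A, (TensorProduct.comm K A A) (Δ x) = Δ x

/-- The co-Jacobi identity. -/
def IsCoJacobi {K A : Type*} [Field K] [AddCommGroup A] [Module K A]
    (Δ : A →ₗ[K] A ⊗[K] A) : Prop :=
  ∀ x : A,
    (lTensor A Δ) (Δ x) +
    (TensorProduct.assoc K A A A) ((rTensor A Δ) (Δ x)) +
    (TensorProduct.leftComm K A A A) ((lTensor A Δ) (Δ x)) = 0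

/-- `f(w₁)·g(w₂)` for `w = w₁ ⊗ w₂ ∈ A ⊗ A`. -/
noncomputable def pair2 {K A : Type*} [Field K] [AddCommGroup A] [Module K A]
    (f g : Dual K A) (w : A ⊗[K] A) : K :=
  (TensorProduct.lid K K) ((TensorProduct.map f g) w)

/-- `[x,y]_ω = x₍₁₎ ω(x₍₂₎, y) - y₍₁₎ ω(x, y₍₂₎)`. -/
noncomputable def brW {K A : Type*} [Field K] [AddCommGroup A] [Module K A]
    (Δ : A →ₗ[K] A ⊗[K] A) (ω : A →ₗ[K] A →ₗ[K] K) (x y : A) : A :=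
  (TensorProduct.rid K A) ((lTensor A (ω.flip y)) (Δ x)) -
  (TensorProduct.rid K A) ((lTensor A (ω x)) (Δ y))

/-!
Skew-symmetry gives `ω(·, y) = -ω(y, ·)`, which makes both terms of `[x, y]_ω` symmetric in
`x, y`. For the Jacobi identity, the Yang-Baxter equation says exactly that
`ω(a, [y, z]_ω) = ω(y, a₍₁₎) ω(z, a₍₂₎)`. Expanding `[x, [y, z]_ω]_ω` with this produces a
contraction of `(id ⊗ Δ) Δ x` and contractions of `(Δ ⊗ id) Δ y`, `(Δ ⊗ id) Δ z`; co-Jacobi and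
cocommutativity rewrite the former as contractions of `(Δ ⊗ id) Δ x`, after which the cyclic sum
cancels term by term.
-/

namespace TensorProduct

variable {R M N P : Type*} [CommSemiring R] [AddCommMonoid M] [AddCommMonoid N]
  [AddCommMonoid P] [Module R M] [Module R N] [Module R P]

noncomputable def sliceRight (f : Dual R N) : M ⊗[R] N →ₗ[R] M :=
  (TensorProduct.rid R M).toLinearMap ∘ₗ lTensor M f

noncomputable abbrev sliceRight₂ (f : Dual R N) (g : Dual R P) : M ⊗[R] (N ⊗[R] P) →ₗ[R] M :=
  sliceRight (dualDistrib R N P (f ⊗ₜ g))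

@[simp] theorem sliceRight_tmul (f : Dual R N) (m : M) (n : N) :
    sliceRight f (m ⊗ₜ n) = f n • m := by
  simp [sliceRight]

theorem map_sliceRight (D : M →ₗ[R] P) (f : Dual R N) (t : M ⊗[R] N) :
    D (sliceRight f t) = sliceRight f (rTensor N D t) := by
  induction t using TensorProduct.induction_on <;> simp_all

theorem apply_sliceRight (g : Dual R M) (f : Dual R N) (t : M ⊗[R] N) :
    g (sliceRight f t) = dualDistrib R M N (g ⊗ₜ f) t := by
  induction t using TensorProduct.induction_on <;> simp_all [mul_comm]

theorem sliceRight_lTensor (f : Dual R P) (D : N →ₗ[R] P) (t : M ⊗[R] N) :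
    sliceRight f (lTensor M D t) = sliceRight (f ∘ₗ D) t := by
  induction t using TensorProduct.induction_on <;> simp_all

theorem sliceRight_sliceRight (g : Dual R N) (f : Dual R P) (t : (M ⊗[R] N) ⊗[R] P) :
    sliceRight g (sliceRight f t) = sliceRight₂ g f (TensorProduct.assoc R M N P t) := by
  induction t using TensorProduct.induction_on with
  | tmul mn p =>
    induction mn using TensorProduct.induction_on <;> simp_all [add_tmul, smul_smul, mul_comm]
  | _ => simp_all

theorem sliceRight₂_leftComm (f : Dual R M) (g : Dual R P) (t : M ⊗[R] (N ⊗[R] P)) :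
    sliceRight₂ f g (TensorProduct.leftComm R M N P t) =
      sliceRight₂ g f (TensorProduct.assoc R N P M (TensorProduct.comm R M (N ⊗[R] P) t)) := by
  induction t using TensorProduct.induction_on with
  | tmul m np => induction np using TensorProduct.induction_on <;> simp_all [tmul_add, mul_comm]
  | _ => simp_all

theorem sliceRight_neg {R M N : Type*} [CommRing R] [AddCommGroup M] [AddCommMonoid N]
    [Module R M] [Module R N] (f : Dual R N) (t : M ⊗[R] N) :
    sliceRight (-f) t = -sliceRight f t := by
  induction t using TensorProduct.induction_on <;> simp_all [add_comm]

end TensorProduct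

section MockLie

variable {K A : Type*} [Field K] [AddCommGroup A] [Module K A]
  {Δ : A →ₗ[K] A ⊗[K] A} {ω : A →ₗ[K] A →ₗ[K] K}

theorem sliceRight₂_lTensor_comul (hcocomm : IsCocomm Δ) (hcojac : IsCoJacobi Δ)
    (f g : Dual K A) (x : A) :
    sliceRight₂ f g (lTensor A Δ (Δ x)) =
      -sliceRight₂ f g (TensorProduct.assoc K A A A (rTensor A Δ (Δ x))) -
        sliceRight₂ g f (TensorProduct.assoc K A A A (rTensor A Δ (Δ x))) := by
  have hswap : sliceRight₂ f g (TensorProduct.leftComm K A A A (lTensor A Δ (Δ x))) =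
      sliceRight₂ g f (TensorProduct.assoc K A A A (rTensor A Δ (Δ x))) := by
    rw [sliceRight₂_leftComm, ← rTensor_comm, hcocomm]
  have hjac := congrArg (sliceRight₂ f g) (hcojac x)
  rw [map_add, map_add, map_zero, hswap] at hjac
  rw [← sub_eq_zero, ← hjac]
  abel

theorem pair2_eq_dualDistrib (f g : Dual K A) (w : A ⊗[K] A) :
    pair2 f g w = dualDistrib K A A (f ⊗ₜ g) w := rfl

theorem brW_eq_sliceRight (x y : A) :
    brW Δ ω x y = sliceRight (ω.flip y) (Δ x) - sliceRight (ω x) (Δ y) := rfl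

theorem flip_eq_neg_of_skew (hskew : ∀ x y : A, ω x y = - ω y x) (y : A) : ω.flip y = -ω y := by
  ext x; simp [hskew x y]

theorem brW_comm (hskew : ∀ x y : A, ω x y = - ω y x) (x y : A) :
    brW Δ ω x y = brW Δ ω y x := by
  simp only [brW_eq_sliceRight, flip_eq_neg_of_skew hskew, sliceRight_neg]
  abel

theorem dualDistrib_tmul_flip (hskew : ∀ x y : A, ω x y = - ω y x) (f : Dual K A) (z : A) :
    dualDistrib K A A (f ⊗ₜ ω.flip z) = -dualDistrib K A A (f ⊗ₜ ω z) := by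
  ext a b; simp [hskew b z]

theorem dualDistrib_flip_tmul (hskew : ∀ x y : A, ω x y = - ω y x) (f : Dual K A) (y : A) :
    dualDistrib K A A (ω.flip y ⊗ₜ f) = -dualDistrib K A A (ω y ⊗ₜ f) := by
  ext a b; simp [hskew a y]

variable (Δ ω) in
def IsCoYangBaxter : Prop :=
  ∀ x y z : A,
    pair2 (ω.flip y) (ω.flip z) (Δ x) + pair2 (ω x) (ω y) (Δ z) -
      pair2 (ω x) (ω.flip z) (Δ y) = 0

variable (Δ) in
theorem flip_brW (hskew : ∀ x y : A, ω x y = - ω y x) (hybe : IsCoYangBaxter Δ ω) (y z : A) :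
    ω.flip (brW Δ ω y z) = dualDistrib K A A (ω y ⊗ₜ ω z) ∘ₗ Δ := by
  ext x
  have hx := hybe x y z
  rw [LinearMap.comp_apply, flip_apply, brW_eq_sliceRight, map_sub, apply_sliceRight,
    apply_sliceRight]
  simp only [pair2_eq_dualDistrib, dualDistrib_flip_tmul hskew, dualDistrib_tmul_flip hskew,
    neg_neg, LinearMap.neg_apply] at hx ⊢
  linear_combination -hx

theorem brW_brW (hcocomm : IsCocomm Δ) (hcojac : IsCoJacobi Δ)
    (hskew : ∀ x y : A, ω x y = - ω y x) (hybe : IsCoYangBaxter Δ ω) (x y z : A) :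
    brW Δ ω x (brW Δ ω y z) =
      -sliceRight₂ (ω y) (ω z) (TensorProduct.assoc K A A A (rTensor A Δ (Δ x))) -
        sliceRight₂ (ω z) (ω y) (TensorProduct.assoc K A A A (rTensor A Δ (Δ x))) +
        sliceRight₂ (ω x) (ω z) (TensorProduct.assoc K A A A (rTensor A Δ (Δ y))) +
        sliceRight₂ (ω x) (ω y) (TensorProduct.assoc K A A A (rTensor A Δ (Δ z))) := by
  have hfirst : sliceRight (ω.flip (brW Δ ω y z)) (Δ x) =
      sliceRight₂ (ω y) (ω z) (lTensor A Δ (Δ x)) := by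
    rw [flip_brW Δ hskew hybe, sliceRight_lTensor]
  have hsecond : sliceRight (ω x) (Δ (brW Δ ω y z)) =
      -sliceRight₂ (ω x) (ω z) (TensorProduct.assoc K A A A (rTensor A Δ (Δ y))) -
        sliceRight₂ (ω x) (ω y) (TensorProduct.assoc K A A A (rTensor A Δ (Δ z))) := by
    rw [brW_eq_sliceRight, map_sub, map_sub, map_sliceRight Δ, map_sliceRight Δ,
      sliceRight_sliceRight, sliceRight_sliceRight]
    simp only [sliceRight₂, dualDistrib_tmul_flip hskew, sliceRight_neg]
  rw [brW_eq_sliceRight, hfirst, hsecond, sliceRight₂_lTensor_comul hcocomm hcojac]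
  abel

end MockLie

theorem stmt6_general {K A : Type*} [Field K]
    [AddCommGroup A] [Module K A]
    (Δ : A →ₗ[K] A ⊗[K] A) (ω : A →ₗ[K] A →ₗ[K] K)
    (hcocomm : IsCocomm Δ) (hcojac : IsCoJacobi Δ)
    (hskew : ∀ x y : A, ω x y = - ω y x)
    (hybe : ∀ x y z : A,
      pair2 (ω.flip y) (ω.flip z) (Δ x) + pair2 (ω x) (ω y) (Δ z) -
        pair2 (ω x) (ω.flip z) (Δ y) = 0) :
    (∀ x y : A, brW Δ ω x y = brW Δ ω y x) ∧
    (∀ x y z : A,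
      brW Δ ω x (brW Δ ω y z) + brW Δ ω y (brW Δ ω z x) +
        brW Δ ω z (brW Δ ω x y) = 0) := by
  refine ⟨brW_comm hskew, fun x y z => ?_⟩
  rw [brW_brW hcocomm hcojac hskew hybe x y z, brW_brW hcocomm hcojac hskew hybe y z x,
    brW_brW hcocomm hcojac hskew hybe z x y]
  abel

/-- A skew-symmetric solution of the co-classical mock-Lie Yang-Baxter equation yields a
mock-Lie algebra structure `[,]_ω` on `A`. -/
theorem stmt6 {K A : Type*} [Field K] [CharZero K]
    [AddCommGroup A] [Module K A]
    (Δ : A →ₗ[K] A ⊗[K] A) (ω : A →ₗ[K] A →ₗ[K] K)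
    (hcocomm : IsCocomm Δ) (hcojac : IsCoJacobi Δ)
    (hskew : ∀ x y : A, ω x y = - ω y x)
    (hybe : ∀ x y z : A,
      pair2 (ω.flip y) (ω.flip z) (Δ x) + pair2 (ω x) (ω y) (Δ z) -
        pair2 (ω x) (ω.flip z) (Δ y) = 0) :
    (∀ x y : A, brW Δ ω x y = brW Δ ω y x) ∧
    (∀ x y z : A,
      brW Δ ω x (brW Δ ω y z) + brW Δ ω y (brW Δ ω z x) +
        brW Δ ω z (brW Δ ω x y) = 0) :=
  stmt6_general Δ ω hcocomm hcojac hskew hybe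
end

section
/- Let $(\mathcal{A},\Delta)$ be a mock-Lie coalgebra, $\omega$ a skew-symmetric bilinear form, and $[x,y]_\omega = x_{(1)}\omega(x_{(2)},y) - y_{(1)}\omega(x,y_{(2)})$. If $\omega$ satisfies $\omega([x,y]_\omega, z) = -\omega(x,z_{(1)})\omega(y,z_{(2)})$ for all $x,y,z$, then $\omega$ solves the co-classical mock-Lie Yang-Baxter equation $\omega(x_{(1)},y)\omega(x_{(2)},z) + \omega(x,z_{(1)})\omega(y,z_{(2)}) - \omega(x,y_{(1)})\omega(y_{(2)},z) = 0$, and conversely. -/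
open TensorProduct LinearMap Module

/-! Both sides are the same identity: by cocommutativity the factors of `Δ x` and `Δ y` in
`ω([x,y]_ω, z)` may be swapped, which turns it into the first and third terms of the
Yang-Baxter expression, while the middle term is exactly `ω(x,z₍₁₎)ω(y,z₍₂₎)`. -/

section

variable {K A : Type*} [Field K] [AddCommGroup A] [Module K A]

lemma pair2_comm (f g : Dual K A) (w : A ⊗[K] A) :
    pair2 f g (TensorProduct.comm K A A w) = pair2 g f w := by
  induction w using TensorProduct.induction_on with
  | zero => simp [pair2]
  | tmul a b => simp [pair2, mul_comm]
  | add u v hu hv => simp only [pair2, map_add] at *; rw [hu, hv]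

lemma IsCocomm.pair2_swap {Δ : A →ₗ[K] A ⊗[K] A} (hΔ : IsCocomm Δ) (f g : Dual K A)
    (x : A) :
    pair2 f g (Δ x) = pair2 g f (Δ x) := by
  rw [← pair2_comm, hΔ x]

lemma apply_rid_lTensor (φ f : Dual K A) (w : A ⊗[K] A) :
    φ (TensorProduct.rid K A (lTensor A f w)) = pair2 φ f w := by
  induction w using TensorProduct.induction_on with
  | zero => simp [pair2]
  | tmul a b => simp [pair2, mul_comm]
  | add u v hu hv => simp only [pair2, map_add] at *; rw [hu, hv]

lemma brW_apply {Δ : A →ₗ[K] A ⊗[K] A} (hΔ : IsCocomm Δ) (ω : A →ₗ[K] A →ₗ[K] K)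
    (x y z : A) :
    ω (brW Δ ω x y) z =
      pair2 (ω.flip y) (ω.flip z) (Δ x) - pair2 (ω x) (ω.flip z) (Δ y) := by
  rw [← ω.flip_apply, brW, map_sub, apply_rid_lTensor, apply_rid_lTensor,
    hΔ.pair2_swap (ω.flip z), hΔ.pair2_swap (ω.flip z)]

end

theorem stmt7_general {K A : Type*} [Field K]
    [AddCommGroup A] [Module K A]
    (Δ : A →ₗ[K] A ⊗[K] A) (ω : A →ₗ[K] A →ₗ[K] K)
    (hcocomm : IsCocomm Δ) :
    (∀ x y z : A, ω (brW Δ ω x y) z = - pair2 (ω x) (ω y) (Δ z)) ↔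
    (∀ x y z : A,
      pair2 (ω.flip y) (ω.flip z) (Δ x) + pair2 (ω x) (ω y) (Δ z) -
        pair2 (ω x) (ω.flip z) (Δ y) = 0) := by
  simp only [brW_apply hcocomm, eq_neg_iff_add_eq_zero, sub_add_eq_add_sub]

/-- `ω([x,y]_ω, z) = -ω(x,z₍₁₎)ω(y,z₍₂₎)` holds for all `x,y,z` iff `ω` solves the
co-classical mock-Lie Yang-Baxter equation. -/
theorem stmt7 {K A : Type*} [Field K] [CharZero K]
    [AddCommGroup A] [Module K A]
    (Δ : A →ₗ[K] A ⊗[K] A) (ω : A →ₗ[K] A →ₗ[K] K)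
    (hcocomm : IsCocomm Δ) (hcojac : IsCoJacobi Δ)
    (hskew : ∀ x y : A, ω x y = - ω y x) :
    (∀ x y z : A, ω (brW Δ ω x y) z = - pair2 (ω x) (ω y) (Δ z)) ↔
    (∀ x y z : A,
      pair2 (ω.flip y) (ω.flip z) (Δ x) + pair2 (ω x) (ω y) (Δ z) -
        pair2 (ω x) (ω.flip z) (Δ y) = 0) :=
  stmt7_general Δ ω hcocomm
end

section
/- Let $(\mathcal{A},[~,~],N)$ be a finite-dimensional Nijenhuis mock-Lie algebra with a nondegenerate invariant bilinear form $\mathfrak{B}$ (i.e. $\mathfrak{B}([x,y],z)=\mathfrak{B}(x,[y,z])$), and let $\hat N$ be the adjoint of $N$ with respect to $\mathfrak{B}$ (i.e. $\mathfrak{B}(N(x),y)=\mathfrak{B}(x,\hat N(y))$). Then $\hat N$ is adjoint-admissible to $(\mathcal{A},[~,~],N)$, i.e. $\hat N([N(x),y]) + [x,\hat N^2(y)] = [N(x),\hat N(y)] + \hat N([x,\hat N(y)])$ for all $x,y\in\mathcal{A}$. -/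
/-!
Pair both sides with an arbitrary `z`. Invariance of `B` and the adjunction between `N` and `N̂`
move every `N̂`, and the bracket with `x`, into the left slot, so that `B z` applied to the
adjoint-admissibility identity at `(x, y)` becomes `B (·) y` applied to the Nijenhuis identity at
`(z, x)`. Nondegeneracy of `B` then transfers the Nijenhuis identity of `N` to the
adjoint-admissibility of `N̂`.
-/

theorem LinearMap.SeparatingRight.eq_of_forall_apply_eq {R M : Type*} [CommRing R]
    [AddCommGroup M] [Module R M] {B : M →ₗ[R] M →ₗ[R] R} (hB : B.SeparatingRight) {u v : M}
    (h : ∀ z, B z u = B z v) : u = v :=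
  sub_eq_zero.mp <| hB _ fun z => by rw [map_sub, h, sub_self]

section AdjointAdmissible

variable {R A : Type*} [CommRing R] [AddCommGroup A] [Module R A]
  {b : A →ₗ[R] A →ₗ[R] A} {N Nhat : A →ₗ[R] A} {B : A →ₗ[R] A →ₗ[R] R}

theorem apply_adjointAdmissible_sub_eq (hinv : ∀ x y z, B (b x y) z = B x (b y z))
    (hadj : B.IsAdjointPair B N Nhat) (x y z : A) :
    B z (Nhat (b (N x) y) + b x (Nhat (Nhat y))) - B z (b (N x) (Nhat y) + Nhat (b x (Nhat y))) =
      B (b (N z) (N x) + N (N (b z x))) y - B (N (b (N z) x) + N (b z (N x))) y := by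
  have h₁ : B z (Nhat (b (N x) y)) = B (b (N z) (N x)) y := by rw [← hadj, hinv]
  have h₂ : B z (b x (Nhat (Nhat y))) = B (N (N (b z x))) y := by rw [← hinv, ← hadj, ← hadj]
  have h₃ : B z (b (N x) (Nhat y)) = B (N (b z (N x))) y := by rw [← hinv, ← hadj]
  have h₄ : B z (Nhat (b x (Nhat y))) = B (N (b (N z) x)) y := by rw [← hadj, ← hinv, ← hadj]
  simp only [map_add, LinearMap.add_apply, h₁, h₂, h₃, h₄]
  ring

end AdjointAdmissible

theorem stmt13_general {K A : Type*} [Field K]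
    [AddCommGroup A] [Module K A]
    (b : A →ₗ[K] A →ₗ[K] A) (N Nhat : A →ₗ[K] A)
    (B : A →ₗ[K] A →ₗ[K] K)
    (hN : ∀ x y : A, b (N x) (N y) + N (N (b x y)) = N (b (N x) y) + N (b x (N y)))
    (hndr : ∀ y : A, (∀ x : A, B x y = 0) → y = 0)
    (hinv : ∀ x y z : A, B (b x y) z = B x (b y z))
    (hadj : ∀ x y : A, B (N x) y = B x (Nhat y)) :
    ∀ x y : A,
      Nhat (b (N x) y) + b x (Nhat (Nhat y)) =
        b (N x) (Nhat y) + Nhat (b x (Nhat y)) := by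
  intro x y
  refine LinearMap.SeparatingRight.eq_of_forall_apply_eq hndr fun z => sub_eq_zero.mp ?_
  rw [apply_adjointAdmissible_sub_eq hinv hadj, hN z x, sub_self]

/-- The adjoint `N̂` of a Nijenhuis operator `N` with respect to a nondegenerate invariant
bilinear form on a Nijenhuis mock-Lie algebra is adjoint-admissible. -/
theorem stmt13 {K A : Type*} [Field K] [CharZero K]
    [AddCommGroup A] [Module K A] [FiniteDimensional K A]
    (b : A →ₗ[K] A →ₗ[K] A) (N Nhat : A →ₗ[K] A)
    (B : A →ₗ[K] A →ₗ[K] K)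
    (hcomm : ∀ x y : A, b x y = b y x)
    (hjac : ∀ x y z : A, b x (b y z) + b y (b z x) + b z (b x y) = 0)
    (hN : ∀ x y : A, b (N x) (N y) + N (N (b x y)) = N (b (N x) y) + N (b x (N y)))
    (hndl : ∀ x : A, (∀ y : A, B x y = 0) → x = 0)
    (hndr : ∀ y : A, (∀ x : A, B x y = 0) → y = 0)
    (hinv : ∀ x y z : A, B (b x y) z = B x (b y z))
    (hadj : ∀ x y : A, B (N x) y = B x (Nhat y)) :
    ∀ x y : A,
      Nhat (b (N x) y) + b x (Nhat (Nhat y)) =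
        b (N x) (Nhat y) + Nhat (b x (Nhat y)) :=
  stmt13_general b N Nhat B hN hndr hinv hadj
end

section
/- Let $((\mathcal{A}\oplus\mathcal{A}^*,[~,~]_\diamond,N+S^*),(\mathcal{A},N),(\mathcal{A}^*,S^*),\mathfrak{B}_d)$ be a Manin triple of a Nijenhuis mock-Lie algebra associated to $(\mathcal{A},[~,~],N)$ and $(\mathcal{A}^*,[~,~]_{\mathcal{A}^*},S^*)$, where $\mathfrak{B}_d(x+a^*,y+b^*)=\langle a^*,y\rangle+\langle b^*,x\rangle$. Then the adjoint of $N+S^*$ with respect to $\mathfrak{B}_d$ equals $S+N^*$, and $S$ is adjoint-admissible to $(\mathcal{A},[~,~],N)$ while $N^*$ is adjoint-admissible to $(\mathcal{A}^*,[~,~]_{\mathcal{A}^*},S^*)$. -/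
/-!
Invariance of `𝔅_d` pins down the mixed brackets: for `x ∈ A`, `g ∈ A^*` the `A^*`-component of
`[x, g]_⋄` is `g ∘ [x, -]`, and the `A`-component is the vector on which each `f` takes the value
`[g, f]_{A^*}(x)`. Substituting these into the Nijenhuis identity of `N + S^*` at `(x, g)` and
pairing its two components with `A` and `A^*` gives exactly the two admissibility identities.
-/

open Module

/-- The canonical pairing form `𝔅_d(x+a^*, y+b^*) = ⟨a^*,y⟩ + ⟨b^*,x⟩` on `A ⊕ A^*`. -/
def Bd {K A : Type*} [Field K] [AddCommGroup A] [Module K A]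
    (u v : A × Dual K A) : K :=
  u.2 v.1 + v.2 u.1

def IsNijenhuis {M : Type*} [Add M] (br : M → M → M) (T : M → M) : Prop :=
  ∀ u v, br (T u) (T v) + T (T (br u v)) = T (br (T u) v) + T (br u (T v))

def IsAdjointAdmissible {M : Type*} [Add M] (br : M → M → M) (N S : M → M) : Prop :=
  ∀ x y, S (br (N x) y) + br x (S (S y)) = br (N x) (S y) + S (br x (S y))

section ManinTriple

variable {K A : Type*} [Field K] [AddCommGroup A] [Module K A]

theorem Bd_prodMap_dualMap (N S : A →ₗ[K] A) (u v : A × Dual K A) :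
    Bd ((N u.1, S.dualMap u.2) : A × Dual K A) v =
      Bd u ((S v.1, N.dualMap v.2) : A × Dual K A) := by
  simp only [Bd, LinearMap.dualMap_apply]

variable {b : A →ₗ[K] A →ₗ[K] A} {bst : Dual K A →ₗ[K] Dual K A →ₗ[K] Dual K A}
  {bd : A × Dual K A → A × Dual K A → A × Dual K A}

theorem snd_bd_inl_inr (hcomm : ∀ x y : A, b x y = b y x)
    (hsubA : ∀ x y : A, bd (x, 0) (y, 0) = (b x y, 0))
    (hinv : ∀ u v w : A × Dual K A, Bd (bd u v) w = Bd u (bd v w))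
    (x : A) (g : Dual K A) : (bd (x, 0) (0, g)).2 = (b x).dualMap g := by
  ext y
  have h := hinv (y, 0) (x, 0) (0, g)
  simp only [hsubA, Bd, map_zero, zero_add, LinearMap.zero_apply] at h
  rw [LinearMap.dualMap_apply, ← hcomm, h]

theorem apply_fst_bd_inl_inr (hsubAst : ∀ f g : Dual K A, bd (0, f) (0, g) = ((0 : A), bst f g))
    (hinv : ∀ u v w : A × Dual K A, Bd (bd u v) w = Bd u (bd v w))
    (x : A) (g f : Dual K A) : f (bd (x, 0) (0, g)).1 = bst g f x := by
  have h := hinv (x, 0) (0, g) (0, f)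
  simpa only [hsubAst, Bd, map_zero, zero_add, add_zero, LinearMap.zero_apply] using h

variable {N S : A →ₗ[K] A}

theorem isNijenhuis_inl_inr (hNd : IsNijenhuis bd (Prod.map N S.dualMap))
    (x : A) (g : Dual K A) :
    bd (N x, 0) (0, S.dualMap g) +
        Prod.map N S.dualMap (Prod.map N S.dualMap (bd (x, 0) (0, g))) =
      Prod.map N S.dualMap (bd (N x, 0) (0, g)) +
        Prod.map N S.dualMap (bd (x, 0) (0, S.dualMap g)) := by
  simpa only [Prod.map, map_zero] using hNd (x, 0) (0, g)

theorem isAdjointAdmissible_of_isNijenhuis_prodMap (hcomm : ∀ x y : A, b x y = b y x)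
    (hsubA : ∀ x y : A, bd (x, 0) (y, 0) = (b x y, 0))
    (hinv : ∀ u v w : A × Dual K A, Bd (bd u v) w = Bd u (bd v w))
    (hNd : IsNijenhuis bd (Prod.map N S.dualMap)) :
    IsAdjointAdmissible (fun x y => b x y) N S := by
  intro x y
  rw [← sub_eq_zero, ← forall_dual_apply_eq_zero_iff K]
  intro g
  have h := congrArg (fun u => u.2 y) (isNijenhuis_inl_inr hNd x g)
  simp only [Prod.snd_add, Prod.map_snd, LinearMap.add_apply, LinearMap.dualMap_apply,
    snd_bd_inl_inr hcomm hsubA hinv] at h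
  simp only [map_sub, map_add]
  linear_combination h

theorem isAdjointAdmissible_dualMap_of_isNijenhuis_prodMap
    (hsubAst : ∀ f g : Dual K A, bd (0, f) (0, g) = ((0 : A), bst f g))
    (hinv : ∀ u v w : A × Dual K A, Bd (bd u v) w = Bd u (bd v w))
    (hNd : IsNijenhuis bd (Prod.map N S.dualMap)) :
    IsAdjointAdmissible (fun f g => bst f g) S.dualMap N.dualMap := by
  intro f g
  ext x
  have h := congrArg (fun u => g u.1) (isNijenhuis_inl_inr hNd x f)
  simp only [Prod.fst_add, Prod.map_fst, map_add, ← LinearMap.dualMap_apply,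
    apply_fst_bd_inl_inr hsubAst hinv] at h
  simp only [LinearMap.add_apply, LinearMap.dualMap_apply] at h ⊢
  linear_combination h

end ManinTriple

theorem stmt14_general {K A : Type*} [Field K]
    [AddCommGroup A] [Module K A]
    (b : A →ₗ[K] A →ₗ[K] A) (bst : Dual K A →ₗ[K] Dual K A →ₗ[K] Dual K A)
    (N S : A →ₗ[K] A)
    (bd : A × Dual K A → A × Dual K A → A × Dual K A)
    -- `(A,[,],N)` is a Nijenhuis mock-Lie algebra
    (hcomm : ∀ x y : A, b x y = b y x)
    -- `(A ⊕ A^*, [,]_⋄)` is a mock-Lie algebra containing `A` and `A^*` as subalgebras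
    (hsubA : ∀ x y : A, bd (x, 0) (y, 0) = (b x y, 0))
    (hsubAst : ∀ f g : Dual K A, bd (0, f) (0, g) = ((0 : A), bst f g))
    -- `𝔅_d` is invariant
    (hinv : ∀ u v w : A × Dual K A, Bd (bd u v) w = Bd u (bd v w))
    -- `N + S^*` is a Nijenhuis operator on `(A ⊕ A^*, [,]_⋄)`
    (hNd : ∀ u v : A × Dual K A,
      bd (N u.1, S.dualMap u.2) (N v.1, S.dualMap v.2) +
        (N (N (bd u v).1), S.dualMap (S.dualMap (bd u v).2)) =
      (N (bd (N u.1, S.dualMap u.2) v).1, S.dualMap (bd (N u.1, S.dualMap u.2) v).2) +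
      (N (bd u (N v.1, S.dualMap v.2)).1, S.dualMap (bd u (N v.1, S.dualMap v.2)).2)) :
    (∀ u v : A × Dual K A,
        Bd ((N u.1, S.dualMap u.2) : A × Dual K A) v =
          Bd u ((S v.1, N.dualMap v.2) : A × Dual K A)) ∧
    (∀ x y : A,
      S (b (N x) y) + b x (S (S y)) = b (N x) (S y) + S (b x (S y))) ∧
    (∀ f g : Dual K A,
      N.dualMap (bst (S.dualMap f) g) + bst f (N.dualMap (N.dualMap g)) =
        bst (S.dualMap f) (N.dualMap g) + N.dualMap (bst f (N.dualMap g))) :=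
  ⟨Bd_prodMap_dualMap N S,
    isAdjointAdmissible_of_isNijenhuis_prodMap hcomm hsubA hinv hNd,
    isAdjointAdmissible_dualMap_of_isNijenhuis_prodMap hsubAst hinv hNd⟩

/-- For a Manin triple of a Nijenhuis mock-Lie algebra, the adjoint of `N + S^*` with
respect to `𝔅_d` equals `S + N^*`, `S` is adjoint-admissible to `(A,[,],N)` and `N^*`
is adjoint-admissible to `(A^*,[,]_{A^*},S^*)`. -/
theorem stmt14 {K A : Type*} [Field K] [CharZero K]
    [AddCommGroup A] [Module K A] [FiniteDimensional K A]
    (b : A →ₗ[K] A →ₗ[K] A) (bst : Dual K A →ₗ[K] Dual K A →ₗ[K] Dual K A)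
    (N S : A →ₗ[K] A)
    (bd : A × Dual K A → A × Dual K A → A × Dual K A)
    -- `(A,[,],N)` is a Nijenhuis mock-Lie algebra
    (hcomm : ∀ x y : A, b x y = b y x)
    (hjac : ∀ x y z : A, b x (b y z) + b y (b z x) + b z (b x y) = 0)
    (hN : ∀ x y : A, b (N x) (N y) + N (N (b x y)) = N (b (N x) y) + N (b x (N y)))
    -- `(A^*,[,]_{A^*},S^*)` is a Nijenhuis mock-Lie algebra
    (hcommst : ∀ f g : Dual K A, bst f g = bst g f)
    (hjacst : ∀ f g h : Dual K A,
      bst f (bst g h) + bst g (bst h f) + bst h (bst f g) = 0)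
    (hSst : ∀ f g : Dual K A,
      bst (S.dualMap f) (S.dualMap g) + S.dualMap (S.dualMap (bst f g)) =
        S.dualMap (bst (S.dualMap f) g) + S.dualMap (bst f (S.dualMap g)))
    -- `(A ⊕ A^*, [,]_⋄)` is a mock-Lie algebra containing `A` and `A^*` as subalgebras
    (hcommd : ∀ u v : A × Dual K A, bd u v = bd v u)
    (hjacd : ∀ u v w : A × Dual K A, bd u (bd v w) + bd v (bd w u) + bd w (bd u v) = 0)
    (hsubA : ∀ x y : A, bd (x, 0) (y, 0) = (b x y, 0))
    (hsubAst : ∀ f g : Dual K A, bd (0, f) (0, g) = ((0 : A), bst f g))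
    -- `𝔅_d` is invariant
    (hinv : ∀ u v w : A × Dual K A, Bd (bd u v) w = Bd u (bd v w))
    -- `N + S^*` is a Nijenhuis operator on `(A ⊕ A^*, [,]_⋄)`
    (hNd : ∀ u v : A × Dual K A,
      bd (N u.1, S.dualMap u.2) (N v.1, S.dualMap v.2) +
        (N (N (bd u v).1), S.dualMap (S.dualMap (bd u v).2)) =
      (N (bd (N u.1, S.dualMap u.2) v).1, S.dualMap (bd (N u.1, S.dualMap u.2) v).2) +
      (N (bd u (N v.1, S.dualMap v.2)).1, S.dualMap (bd u (N v.1, S.dualMap v.2)).2)) :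
    (∀ u v : A × Dual K A,
        Bd ((N u.1, S.dualMap u.2) : A × Dual K A) v =
          Bd u ((S v.1, N.dualMap v.2) : A × Dual K A)) ∧
    (∀ x y : A,
      S (b (N x) y) + b x (S (S y)) = b (N x) (S y) + S (b x (S y))) ∧
    (∀ f g : Dual K A,
      N.dualMap (bst (S.dualMap f) g) + bst f (N.dualMap (N.dualMap g)) =
        bst (S.dualMap f) (N.dualMap g) + N.dualMap (bst f (N.dualMap g))) :=
  stmt14_general b bst N S bd hcomm hsubA hsubAst hinv hNd
end

section
/- Let $(\mathcal{A},[~,~],N)$ be a finite-dimensional Nijenhuis mock-Lie algebra and $r\in\mathcal{A}\otimes\mathcal{A}$ antisymmetric, with associated linear map $T_r:\mathcal{A}^*\to\mathcal{A}$, $T_r(u^*)=\sum_i\langle u^*,u_i\rangle v_i$ for $r=\sum_i u_i\otimes v_i$. Let $S:\mathcal{A}\to\mathcal{A}$ be linear. Then $r$ is a solution of the $S$-admissible mock-Lie Yang-Baxter equation in $(\mathcal{A},[~,~],N)$ if and only if $T_r$ satisfies $[T_r(x^*),T_r(y^*)] = T_r(\mathrm{ad}^*(T_r(x^*))y^* +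 \mathrm{ad}^*(T_r(y^*))x^*)$ for all $x^*,y^*\in\mathcal{A}^*$ and $N\circ T_r = T_r\circ S^*$. -/
open TensorProduct Module

/-! Everything is read off by contracting tensors against dual vectors, which detects tensors
because `A` is finite-dimensional. Contracting the Yang–Baxter tensor with `f` and `g` in its
first two legs gives `[T f, T g] - T (ad^*(T f) g + ad^*(T g) f)`, once antisymmetry of `r`
turns `∑ ⟨g, r2 i⟩ r1 i` into `-T g`; contracting `(S ⊗ id - id ⊗ N) r` with `f` gives
`T (S^* f) - N (T f)`. Finally, antisymmetry makes the flip carry `(N ⊗ id - id ⊗ S) r`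
to `(S ⊗ id - id ⊗ N) r`, so conditions (ii) and (iii) coincide. -/

/-- The linear map `T_r : A^* → A` associated to `r = ∑ i, r1 i ⊗ r2 i`,
`T_r(u^*) = ∑ i ⟨u^*, r1 i⟩ r2 i`. -/
noncomputable def Tr {K A ι : Type*} [Field K] [AddCommGroup A] [Module K A]
    [Fintype ι] (r1 r2 : ι → A) (f : Dual K A) : A :=
  ∑ i, f (r1 i) • r2 i

section Contraction

variable {K A M : Type*} [Field K] [AddCommGroup A] [Module K A] [AddCommGroup M] [Module K M]

noncomputable def contractFst (f : Dual K A) : A ⊗[K] M →ₗ[K] M :=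
  (TensorProduct.lid K M).toLinearMap ∘ₗ TensorProduct.map f LinearMap.id

@[simp] lemma contractFst_tmul (f : Dual K A) (a : A) (m : M) :
    contractFst f (a ⊗ₜ[K] m) = f a • m := by
  simp [contractFst]

lemma eq_zero_of_forall_contractFst_eq_zero [FiniteDimensional K A] (t : A ⊗[K] M)
    (h : ∀ f : Dual K A, contractFst f t = 0) : t = 0 := by
  let e : A ⊗[K] M ≃ₗ[K] (Dual K A →ₗ[K] M) :=
    (TensorProduct.congr (Module.evalEquiv K A) (LinearEquiv.refl K M)).trans
      (dualTensorHomEquiv K (Dual K A) M)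
  have he : ∀ (s : A ⊗[K] M) (f : Dual K A), e s f = contractFst f s := by
    intro s f
    induction s using TensorProduct.induction_on with
    | zero => simp
    | tmul a m => simp [e]
    | add x y hx hy => simp [map_add, hx, hy]
  exact (map_eq_zero_iff e e.injective).mp (LinearMap.ext fun f => (he t f).trans (h f))

end Contraction

section Tr

variable {K A ι : Type*} [Field K] [AddCommGroup A] [Module K A] [Fintype ι] (r1 r2 : ι → A)

lemma Tr_add (f g : Dual K A) : Tr r1 r2 (f + g) = Tr r1 r2 f + Tr r1 r2 g := by
  simp [Tr, add_smul, Finset.sum_add_distrib]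

lemma Tr_neg (f : Dual K A) : Tr r1 r2 (-f) = -Tr r1 r2 f := by
  simp [Tr]

variable {r1 r2}

lemma sum_map_tmul_swap_of_comm_eq_neg
    (hanti : TensorProduct.comm K A A (∑ i, r1 i ⊗ₜ[K] r2 i) = - ∑ i, r1 i ⊗ₜ[K] r2 i)
    (P Q : A →ₗ[K] A) :
    ∑ i, P (r2 i) ⊗ₜ[K] Q (r1 i) = - ∑ i, P (r1 i) ⊗ₜ[K] Q (r2 i) := by
  simpa [map_sum] using congrArg (TensorProduct.map P Q) hanti

lemma Tr_swap_of_comm_eq_neg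
    (hanti : TensorProduct.comm K A A (∑ i, r1 i ⊗ₜ[K] r2 i) = - ∑ i, r1 i ⊗ₜ[K] r2 i)
    (f : Dual K A) : Tr r2 r1 f = - Tr r1 r2 f := by
  simpa [Tr, map_sum] using
    congrArg (contractFst (M := A) f) (sum_map_tmul_swap_of_comm_eq_neg hanti .id .id)

end Tr

section YangBaxter

variable {K A ι : Type*} [Field K] [AddCommGroup A] [Module K A] [Fintype ι] {r1 r2 : ι → A}

lemma contractFst_sum_map_tmul_sub (P Q : A →ₗ[K] A) (f : Dual K A) :
    contractFst f (∑ i, P (r1 i) ⊗ₜ[K] r2 i - ∑ i, r1 i ⊗ₜ[K] Q (r2 i)) =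
      Tr r1 r2 (P.dualMap f) - Q (Tr r1 r2 f) := by
  simp [Tr, map_sum, LinearMap.dualMap_apply']

lemma sum_map_tmul_sub_eq_zero_iff [FiniteDimensional K A] (P Q : A →ₗ[K] A) :
    ∑ i, P (r1 i) ⊗ₜ[K] r2 i - ∑ i, r1 i ⊗ₜ[K] Q (r2 i) = 0 ↔
      ∀ f : Dual K A, Q (Tr r1 r2 f) = Tr r1 r2 (P.dualMap f) := by
  refine ⟨fun h f => ?_, fun h => eq_zero_of_forall_contractFst_eq_zero _ fun f => ?_⟩
  · have := contractFst_sum_map_tmul_sub (r1 := r1) (r2 := r2) P Q f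
    rw [h, map_zero, eq_comm, sub_eq_zero] at this
    exact this.symm
  · rw [contractFst_sum_map_tmul_sub, h, sub_self]

lemma comm_sum_map_tmul_sub_of_comm_eq_neg
    (hanti : TensorProduct.comm K A A (∑ i, r1 i ⊗ₜ[K] r2 i) = - ∑ i, r1 i ⊗ₜ[K] r2 i)
    (P Q : A →ₗ[K] A) :
    TensorProduct.comm K A A (∑ i, P (r1 i) ⊗ₜ[K] r2 i - ∑ i, r1 i ⊗ₜ[K] Q (r2 i)) =
      ∑ i, Q (r1 i) ⊗ₜ[K] r2 i - ∑ i, r1 i ⊗ₜ[K] P (r2 i) := by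
  have hP := sum_map_tmul_swap_of_comm_eq_neg hanti .id P
  have hQ := sum_map_tmul_swap_of_comm_eq_neg hanti Q .id
  simp only [LinearMap.id_apply] at hP hQ
  simp only [map_sub, map_sum, TensorProduct.comm_tmul, hP, hQ]
  abel

lemma sum_map_tmul_sub_eq_zero_iff_swap
    (hanti : TensorProduct.comm K A A (∑ i, r1 i ⊗ₜ[K] r2 i) = - ∑ i, r1 i ⊗ₜ[K] r2 i)
    (P Q : A →ₗ[K] A) :
    ∑ i, P (r1 i) ⊗ₜ[K] r2 i - ∑ i, r1 i ⊗ₜ[K] Q (r2 i) = 0 ↔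
      ∑ i, Q (r1 i) ⊗ₜ[K] r2 i - ∑ i, r1 i ⊗ₜ[K] P (r2 i) = 0 := by
  rw [← (TensorProduct.comm K A A).map_eq_zero_iff, comm_sum_map_tmul_sub_of_comm_eq_neg hanti]

variable (b : A →ₗ[K] A →ₗ[K] A)

lemma contractFst_contractFst_ybe (f g : Dual K A) :
    contractFst g (contractFst f
      (∑ i, ∑ j, b (r1 i) (r1 j) ⊗ₜ[K] (r2 i ⊗ₜ[K] r2 j) +
        ∑ i, ∑ j, r1 i ⊗ₜ[K] (r1 j ⊗ₜ[K] b (r2 i) (r2 j)) -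
        ∑ i, ∑ j, r1 i ⊗ₜ[K] (b (r2 i) (r1 j) ⊗ₜ[K] r2 j))) =
      Tr r1 r2 ((b (Tr r2 r1 g)).dualMap f) + b (Tr r1 r2 f) (Tr r1 r2 g) -
        Tr r1 r2 ((b (Tr r1 r2 f)).dualMap g) := by
  have h12 : contractFst g (contractFst f
      (∑ i, ∑ j, b (r1 i) (r1 j) ⊗ₜ[K] (r2 i ⊗ₜ[K] r2 j))) =
        Tr r1 r2 ((b (Tr r2 r1 g)).dualMap f) := by
    simp only [map_sum, contractFst_tmul, map_smul, smul_smul, Tr, LinearMap.dualMap_apply',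
      LinearMap.coe_comp, LinearMap.coe_sum, LinearMap.coe_smul, Function.comp_apply,
      Finset.sum_apply, Pi.smul_apply, smul_eq_mul, Finset.sum_smul]
    rw [Finset.sum_comm]
    simp only [mul_comm]
  have h13 : contractFst g (contractFst f
      (∑ i, ∑ j, r1 i ⊗ₜ[K] (r1 j ⊗ₜ[K] b (r2 i) (r2 j)))) = b (Tr r1 r2 f) (Tr r1 r2 g) := by
    simp only [map_sum, contractFst_tmul, map_smul, smul_smul, Tr, LinearMap.coe_sum,
      LinearMap.coe_smul, Finset.sum_apply, Pi.smul_apply, Finset.smul_sum]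
    rw [Finset.sum_comm]
    simp only [mul_comm]
  have h23 : contractFst g (contractFst f
      (∑ i, ∑ j, r1 i ⊗ₜ[K] (b (r2 i) (r1 j) ⊗ₜ[K] r2 j))) =
        Tr r1 r2 ((b (Tr r1 r2 f)).dualMap g) := by
    simp only [map_sum, contractFst_tmul, map_smul, smul_smul, Tr, LinearMap.dualMap_apply',
      LinearMap.coe_comp, LinearMap.coe_sum, LinearMap.coe_smul, Function.comp_apply,
      Finset.sum_apply, Pi.smul_apply, smul_eq_mul, Finset.sum_smul]
    rw [Finset.sum_comm]
  rw [map_sub, map_add, map_sub, map_add, h12, h13, h23]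

lemma ybe_eq_zero_iff_of_comm_eq_neg [FiniteDimensional K A]
    (hanti : TensorProduct.comm K A A (∑ i, r1 i ⊗ₜ[K] r2 i) = - ∑ i, r1 i ⊗ₜ[K] r2 i) :
    ∑ i, ∑ j, b (r1 i) (r1 j) ⊗ₜ[K] (r2 i ⊗ₜ[K] r2 j) +
        ∑ i, ∑ j, r1 i ⊗ₜ[K] (r1 j ⊗ₜ[K] b (r2 i) (r2 j)) -
        ∑ i, ∑ j, r1 i ⊗ₜ[K] (b (r2 i) (r1 j) ⊗ₜ[K] r2 j) = 0 ↔
      ∀ f g : Dual K A, b (Tr r1 r2 f) (Tr r1 r2 g) =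
        Tr r1 r2 ((b (Tr r1 r2 f)).dualMap g + (b (Tr r1 r2 g)).dualMap f) := by
  have hcontract : ∀ f g : Dual K A, contractFst g (contractFst f
      (∑ i, ∑ j, b (r1 i) (r1 j) ⊗ₜ[K] (r2 i ⊗ₜ[K] r2 j) +
        ∑ i, ∑ j, r1 i ⊗ₜ[K] (r1 j ⊗ₜ[K] b (r2 i) (r2 j)) -
        ∑ i, ∑ j, r1 i ⊗ₜ[K] (b (r2 i) (r1 j) ⊗ₜ[K] r2 j))) =
      b (Tr r1 r2 f) (Tr r1 r2 g) -
        Tr r1 r2 ((b (Tr r1 r2 f)).dualMap g + (b (Tr r1 r2 g)).dualMap f) := by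
    intro f g
    rw [contractFst_contractFst_ybe, Tr_swap_of_comm_eq_neg hanti]
    have hdual : (b (-Tr r1 r2 g)).dualMap f = -(b (Tr r1 r2 g)).dualMap f := by
      ext; simp
    rw [hdual, Tr_add, Tr_neg]
    abel
  refine ⟨fun h f g => ?_, fun h => ?_⟩
  · rw [← sub_eq_zero, ← hcontract, h, map_zero, map_zero]
  · refine eq_zero_of_forall_contractFst_eq_zero _ fun f =>
      eq_zero_of_forall_contractFst_eq_zero _ fun g => ?_
    rw [hcontract, h, sub_self]

end YangBaxter

theorem stmt15_general {K A ι : Type*} [Field K]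
    [AddCommGroup A] [Module K A] [FiniteDimensional K A] [Fintype ι]
    (b : A →ₗ[K] A →ₗ[K] A) (N S : A →ₗ[K] A) (r1 r2 : ι → A)
    (hanti : (TensorProduct.comm K A A) (∑ i, r1 i ⊗ₜ[K] r2 i) =
      - ∑ i, r1 i ⊗ₜ[K] r2 i) :
    ((∑ i, ∑ j, (b (r1 i) (r1 j)) ⊗ₜ[K] (r2 i ⊗ₜ[K] r2 j) +
      ∑ i, ∑ j, r1 i ⊗ₜ[K] (r1 j ⊗ₜ[K] (b (r2 i) (r2 j))) -
      ∑ i, ∑ j, r1 i ⊗ₜ[K] ((b (r2 i) (r1 j)) ⊗ₜ[K] r2 j) = 0) ∧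
     (∑ i, (N (r1 i)) ⊗ₜ[K] r2 i - ∑ i, r1 i ⊗ₜ[K] (S (r2 i)) = 0) ∧
     (∑ i, (S (r1 i)) ⊗ₜ[K] r2 i - ∑ i, r1 i ⊗ₜ[K] (N (r2 i)) = 0)) ↔
    ((∀ f g : Dual K A,
        b (Tr r1 r2 f) (Tr r1 r2 g) =
          Tr r1 r2 ((b (Tr r1 r2 f)).dualMap g + (b (Tr r1 r2 g)).dualMap f)) ∧
     (∀ f : Dual K A, N (Tr r1 r2 f) = Tr r1 r2 (S.dualMap f))) := by
  rw [ybe_eq_zero_iff_of_comm_eq_neg b hanti, sum_map_tmul_sub_eq_zero_iff_swap hanti N S,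
    and_self, sum_map_tmul_sub_eq_zero_iff]

/-- An antisymmetric `r` solves the `S`-admissible mock-Lie Yang-Baxter equation in the
Nijenhuis mock-Lie algebra `(A,[,],N)` iff `T_r` is an `𝒪`-operator-type map:
`[T_r x^*, T_r y^*] = T_r(ad^*(T_r x^*) y^* + ad^*(T_r y^*) x^*)` and
`N ∘ T_r = T_r ∘ S^*`. -/
theorem stmt15 {K A ι : Type*} [Field K] [CharZero K]
    [AddCommGroup A] [Module K A] [FiniteDimensional K A] [Fintype ι]
    (b : A →ₗ[K] A →ₗ[K] A) (N S : A →ₗ[K] A) (r1 r2 : ι → A)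
    (hcomm : ∀ x y : A, b x y = b y x)
    (hjac : ∀ x y z : A, b x (b y z) + b y (b z x) + b z (b x y) = 0)
    (hN : ∀ x y : A, b (N x) (N y) + N (N (b x y)) = N (b (N x) y) + N (b x (N y)))
    (hanti : (TensorProduct.comm K A A) (∑ i, r1 i ⊗ₜ[K] r2 i) =
      - ∑ i, r1 i ⊗ₜ[K] r2 i) :
    ((∑ i, ∑ j, (b (r1 i) (r1 j)) ⊗ₜ[K] (r2 i ⊗ₜ[K] r2 j) +
      ∑ i, ∑ j, r1 i ⊗ₜ[K] (r1 j ⊗ₜ[K] (b (r2 i) (r2 j))) -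
      ∑ i, ∑ j, r1 i ⊗ₜ[K] ((b (r2 i) (r1 j)) ⊗ₜ[K] r2 j) = 0) ∧
     (∑ i, (N (r1 i)) ⊗ₜ[K] r2 i - ∑ i, r1 i ⊗ₜ[K] (S (r2 i)) = 0) ∧
     (∑ i, (S (r1 i)) ⊗ₜ[K] r2 i - ∑ i, r1 i ⊗ₜ[K] (N (r2 i)) = 0)) ↔
    ((∀ f g : Dual K A,
        b (Tr r1 r2 f) (Tr r1 r2 g) =
          Tr r1 r2 ((b (Tr r1 r2 f)).dualMap g + (b (Tr r1 r2 g)).dualMap f)) ∧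
     (∀ f : Dual K A, N (Tr r1 r2 f) = Tr r1 r2 (S.dualMap f))) :=
  stmt15_general b N S r1 r2 hanti
end

section
/- Let $(\mathcal{A},\mu,N)$ be a Nijenhuis mock-Lie algebra and $(\mu_t,N_t)$, $(\mu'_t,N'_t)$ two equivalent one-parameter formal deformations with formal isomorphism $\psi_t = \mathrm{id} + \psi_1 t + \cdots$. Then the degree-one terms satisfy $\mu'_1(x,y) = \mu_1(x,y) + \mu(x,\psi_1(y)) + \mu(\psi_1(x),y) - \psi_1(\mu(x,y))$ and $N'_1 = N_1 + N\circ\psi_1 - \psi_1\circ N$; hence the infinitesimals $(\mu_1,N_1)$ and $(\mu'_1,N'_1)$ differ by the coboundary of $\psi_1$. -/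
open Finset

/-! Since `ψ₀ = id`, the `t¹`-coefficients of the morphism equations of `ψ_t` read
`μ'₁ + ψ₁ ∘ μ'₀ = μ₁ + μ₀ ∘ (id ⊗ ψ₁) + μ₀ ∘ (ψ₁ ⊗ id)` and `N'₁ + ψ₁ ∘ N'₀ = N₁ + N₀ ∘ ψ₁`;
as the two deformations agree in degree zero, solving for `μ'₁` and `N'₁` gives the
coboundary formulas. -/

theorem infinitesimal_operator_eq_add_coboundary {R M : Type*} [Semiring R] [AddCommGroup M]
    [Module R M] (ψ N N' : ℕ → M →ₗ[R] M)
    (hψ0 : ψ 0 = LinearMap.id) (hN0 : N 0 = N' 0)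
    (hmorphN : ∀ n, ∀ x : M,
      ∑ i ∈ range (n + 1), ψ i (N' (n - i) x) = ∑ i ∈ range (n + 1), N i (ψ (n - i) x))
    (x : M) : N' 1 x = N 1 x + N 0 (ψ 1 x) - ψ 1 (N 0 x) := by
  have h := hmorphN 1 x
  simp only [sum_range_succ, sum_range_zero, zero_add, Nat.sub_zero, Nat.sub_self, hψ0,
    LinearMap.id_apply, ← hN0] at h
  linear_combination (norm := module) h

theorem infinitesimal_mul_eq_add_coboundary {R M : Type*} [CommSemiring R] [AddCommGroup M]
    [Module R M] (ψ : ℕ → M →ₗ[R] M) (μ μ' : ℕ → M →ₗ[R] M →ₗ[R] M)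
    (hψ0 : ψ 0 = LinearMap.id) (hμ0 : μ 0 = μ' 0)
    (hmorph : ∀ n, ∀ x y : M,
      ∑ i ∈ range (n + 1), ψ i (μ' (n - i) x y) =
        ∑ i ∈ range (n + 1), ∑ j ∈ range (n + 1 - i), μ i (ψ j x) (ψ (n - i - j) y))
    (x y : M) : μ' 1 x y = μ 1 x y + μ 0 x (ψ 1 y) + μ 0 (ψ 1 x) y - ψ 1 (μ 0 x y) := by
  have h := hmorph 1 x y
  simp only [sum_range_succ, sum_range_zero, zero_add, Nat.sub_zero, Nat.sub_self,
    Nat.add_one_sub_one, hψ0, LinearMap.id_apply, ← hμ0] at h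
  linear_combination (norm := module) h

theorem stmt19_general {K A : Type*} [Field K]
    [AddCommGroup A] [Module K A]
    (μ μ' : ℕ → (A →ₗ[K] A →ₗ[K] A)) (Nseq Nseq' : ℕ → (A →ₗ[K] A))
    (ψ : ℕ → (A →ₗ[K] A))
    -- `(A, μ 0, Nseq 0)` is a Nijenhuis mock-Lie algebra and both series deform it
    (hbase : μ 0 = μ' 0 ∧ Nseq 0 = Nseq' 0)
    -- `ψ_t = id + ψ₁ t + ⋯` is a formal isomorphism from `(μ'_t, N'_t)` to `(μ_t, N_t)`
    (hψ0 : ψ 0 = LinearMap.id)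
    (hmorph : ∀ n, ∀ x y : A,
      ∑ i ∈ range (n + 1), ψ i (μ' (n - i) x y) =
        ∑ i ∈ range (n + 1), ∑ j ∈ range (n + 1 - i),
          μ i (ψ j x) (ψ (n - i - j) y))
    (hmorphN : ∀ n, ∀ x : A,
      ∑ i ∈ range (n + 1), ψ i (Nseq' (n - i) x) =
        ∑ i ∈ range (n + 1), Nseq i (ψ (n - i) x)) :
    (∀ x y : A,
      μ' 1 x y = μ 1 x y + μ 0 x (ψ 1 y) + μ 0 (ψ 1 x) y - ψ 1 (μ 0 x y)) ∧
    (∀ x : A, Nseq' 1 x = Nseq 1 x + Nseq 0 (ψ 1 x) - ψ 1 (Nseq 0 x)) :=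
  ⟨infinitesimal_mul_eq_add_coboundary ψ μ μ' hψ0 hbase.1 hmorph,
    infinitesimal_operator_eq_add_coboundary ψ Nseq Nseq' hψ0 hbase.2 hmorphN⟩

/-- Coefficientwise mock-Lie/Nijenhuis deformation equations plus a degree-one comparison:
the infinitesimals of two equivalent formal deformations of a Nijenhuis mock-Lie algebra
differ by the coboundary of `ψ₁`. -/
theorem stmt19 {K A : Type*} [Field K] [CharZero K]
    [AddCommGroup A] [Module K A]
    (μ μ' : ℕ → (A →ₗ[K] A →ₗ[K] A)) (Nseq Nseq' : ℕ → (A →ₗ[K] A))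
    (ψ : ℕ → (A →ₗ[K] A))
    -- `(A, μ 0, Nseq 0)` is a Nijenhuis mock-Lie algebra and both series deform it
    (hbase : μ 0 = μ' 0 ∧ Nseq 0 = Nseq' 0)
    (hcomm : ∀ n, ∀ x y : A, μ n x y = μ n y x)
    (hcomm' : ∀ n, ∀ x y : A, μ' n x y = μ' n y x)
    (hjac : ∀ n, ∀ x y z : A,
      ∑ i ∈ range (n + 1),
        (μ i x (μ (n - i) y z) + μ i z (μ (n - i) x y) + μ i y (μ (n - i) z x)) = 0)
    (hjac' : ∀ n, ∀ x y z : A,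
      ∑ i ∈ range (n + 1),
        (μ' i x (μ' (n - i) y z) + μ' i z (μ' (n - i) x y) + μ' i y (μ' (n - i) z x)) = 0)
    (hnij : ∀ n, ∀ u v : A,
      ∑ i ∈ range (n + 1), ∑ j ∈ range (n + 1 - i),
        μ i (Nseq j u) (Nseq (n - i - j) v) =
      ∑ i ∈ range (n + 1), ∑ j ∈ range (n + 1 - i),
        (Nseq i (μ j (Nseq (n - i - j) u) v) + Nseq i (μ j u (Nseq (n - i - j) v)) -
          Nseq i (Nseq (n - i - j) (μ j u v))))
    (hnij' : ∀ n, ∀ u v : A,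
      ∑ i ∈ range (n + 1), ∑ j ∈ range (n + 1 - i),
        μ' i (Nseq' j u) (Nseq' (n - i - j) v) =
      ∑ i ∈ range (n + 1), ∑ j ∈ range (n + 1 - i),
        (Nseq' i (μ' j (Nseq' (n - i - j) u) v) + Nseq' i (μ' j u (Nseq' (n - i - j) v)) -
          Nseq' i (Nseq' (n - i - j) (μ' j u v))))
    -- `ψ_t = id + ψ₁ t + ⋯` is a formal isomorphism from `(μ'_t, N'_t)` to `(μ_t, N_t)`
    (hψ0 : ψ 0 = LinearMap.id)
    (hmorph : ∀ n, ∀ x y : A,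
      ∑ i ∈ range (n + 1), ψ i (μ' (n - i) x y) =
        ∑ i ∈ range (n + 1), ∑ j ∈ range (n + 1 - i),
          μ i (ψ j x) (ψ (n - i - j) y))
    (hmorphN : ∀ n, ∀ x : A,
      ∑ i ∈ range (n + 1), ψ i (Nseq' (n - i) x) =
        ∑ i ∈ range (n + 1), Nseq i (ψ (n - i) x)) :
    (∀ x y : A,
      μ' 1 x y = μ 1 x y + μ 0 x (ψ 1 y) + μ 0 (ψ 1 x) y - ψ 1 (μ 0 x y)) ∧
    (∀ x : A, Nseq' 1 x = Nseq 1 x + Nseq 0 (ψ 1 x) - ψ 1 (Nseq 0 x)) :=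
  stmt19_general μ μ' Nseq Nseq' ψ hbase hψ0 hmorph hmorphN
end
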